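/- For the dual walk Ŕ_n = S_n − n with i.i.d. ℕ-valued increments of mean μ < 1 and p_0 = P(Y = 0) > 0, the probability that a strict ascending ladder epoch never occurs equals 1 − P(L̂_1 < ∞) = (1 − μ)/p_0. -/

import Mathlib

open MeasureTheory ProbabilityTheory Filter
open scoped ENNReal

noncomputable section

variable {Ω : Type*} [MeasureSpace Ω]

/-- Aggregate claims `S_n = Y_1 + ... + Y_n`. -/
def aggClaims (Y : ℕ → Ω → ℕ) (t : ℕ) (ω : Ω) : ℕ := ∑ i ∈ Finset.range t, Y i ω

/-- Dual walk `Ŕ_n = S_n - n`. -/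
def dualWalk (Y : ℕ → Ω → ℕ) (n : ℕ) (ω : Ω) : ℤ := (aggClaims Y n ω : ℤ) - n

/-- First strict ascending ladder epoch `L̂_1 = inf {n ≥ 1 : Ŕ_n > 0}`. -/
def ladderEpoch (Y : ℕ → Ω → ℕ) (ω : Ω) : ℕ∞ :=
  sInf ((fun n : ℕ => (n : ℕ∞)) '' {n : ℕ | 1 ≤ n ∧ 0 < dualWalk Y n ω})


end

/-!
Let `M_n = max_{j ≤ n} (-Ŕ_j)` be the depth reached by the dual walk by time `n`. Since `Ŕ` goes
down by at most one per step, `M` grows at step `n + 1` (by exactly one) iff `n` is a weak minimum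
time of `Ŕ` and `Y_n = 0`; these two events are independent, so `E M_N = p_0 ∑_{n < N} P(n is a
minimum time)`. Reversing the first `n` increments preserves their joint law and turns "`n` is a
minimum time" into "`Ŕ_k ≤ 0` for all `k ≤ n`", whose probability decreases to `P(L̂_1 = ∞)`.
By Cesàro, `E M_N / N → p_0 P(L̂_1 = ∞)`. On the other hand `M_N / N → 1 - μ` almost surely by the
strong law, and dominated convergence (`0 ≤ M_N ≤ N`) identifies the two limits.
-/

open Topology

section

variable {Ω : Type*}

def maxDescent (Y : ℕ → Ω → ℕ) (n : ℕ) (ω : Ω) : ℤ :=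
  partialSups (fun j => -dualWalk Y j ω) n

def atMinimum (Y : ℕ → Ω → ℕ) (n : ℕ) : Set Ω :=
  {ω | ∀ j ≤ n, dualWalk Y n ω ≤ dualWalk Y j ω}

def noLadderBy (Y : ℕ → Ω → ℕ) (n : ℕ) : Set Ω :=
  {ω | ∀ k ≤ n, dualWalk Y k ω ≤ 0}

def revPrefix (n i : ℕ) : ℕ := if i < n then n - 1 - i else i

lemma revPrefix_involutive (n : ℕ) : Function.Involutive (revPrefix n) := by
  intro i
  unfold revPrefix
  split_ifs <;> omega

section Pathwise

variable (Y : ℕ → Ω → ℕ) (ω : Ω)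

lemma dualWalk_zero : dualWalk Y 0 ω = 0 := by
  simp [dualWalk, aggClaims]

lemma dualWalk_succ (n : ℕ) : dualWalk Y (n + 1) ω = dualWalk Y n ω + Y n ω - 1 := by
  simp only [dualWalk, aggClaims, Finset.sum_range_succ]
  push_cast
  ring

lemma neg_dualWalk_le_maxDescent (n : ℕ) : -dualWalk Y n ω ≤ maxDescent Y n ω :=
  le_partialSups (fun j => -dualWalk Y j ω) n

lemma maxDescent_nonneg (n : ℕ) : 0 ≤ maxDescent Y n ω :=
  calc (0 : ℤ) = -dualWalk Y 0 ω := by simp [dualWalk_zero]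
    _ ≤ maxDescent Y n ω := le_partialSups_of_le (fun j => -dualWalk Y j ω) (Nat.zero_le n)

lemma maxDescent_le (n : ℕ) : maxDescent Y n ω ≤ n :=
  partialSups_le _ _ _ fun j hj => by
    simp only [dualWalk]
    omega

lemma maxDescent_le_neg_dualWalk_iff (n : ℕ) :
    maxDescent Y n ω ≤ -dualWalk Y n ω ↔ ω ∈ atMinimum Y n := by
  simp [maxDescent, atMinimum]

open Classical in
lemma maxDescent_succ (n : ℕ) :
    maxDescent Y (n + 1) ω =
      maxDescent Y n ω + if ω ∈ atMinimum Y n ∧ Y n ω = 0 then 1 else 0 := by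
  have hle := neg_dualWalk_le_maxDescent Y ω n
  have hstep :
      maxDescent Y (n + 1) ω = max (maxDescent Y n ω) (-dualWalk Y n ω - Y n ω + 1) := by
    rw [maxDescent, partialSups_add_one, dualWalk_succ]
    congr 1
    ring
  rw [hstep]
  by_cases hmin : ω ∈ atMinimum Y n
  · have := (maxDescent_le_neg_dualWalk_iff Y ω n).2 hmin
    by_cases h0 : Y n ω = 0
    · simp only [hmin, h0, and_self, if_true, Nat.cast_zero]
      omega
    · simp only [h0, and_false, if_false]
      omega
  · have := mt (maxDescent_le_neg_dualWalk_iff Y ω n).1 hmin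
    simp only [hmin, false_and, if_false]
    omega

lemma cast_maxDescent (n : ℕ) :
    (maxDescent Y n ω : ℝ) = partialSups (fun j => ((-dualWalk Y j ω : ℤ) : ℝ)) n :=
  (map_partialSups (OrderHom.mk ((↑) : ℤ → ℝ) Int.cast_mono) _ n).symm

lemma maxDescent_eq_sum_indicator (N : ℕ) :
    (maxDescent Y N ω : ℝ) =
      ∑ n ∈ Finset.range N, (atMinimum Y n ∩ {ω | Y n ω = 0}).indicator 1 ω := by
  induction N with
  | zero => simp [maxDescent, dualWalk_zero]
  | succ N ih =>
    rw [maxDescent_succ, Finset.sum_range_succ, ← ih]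
    by_cases h : ω ∈ atMinimum Y N ∧ Y N ω = 0 <;> simp [Set.indicator, h]

lemma dualWalk_revPrefix {n k : ℕ} (hk : k ≤ n) :
    dualWalk (fun i => Y (revPrefix n i)) k ω = dualWalk Y n ω - dualWalk Y (n - k) ω := by
  induction k with
  | zero => simp [dualWalk_zero]
  | succ k ih =>
    have hsplit : n - k = n - (k + 1) + 1 := by omega
    have hrev : revPrefix n k = n - (k + 1) := by
      simp only [revPrefix, if_pos (show k < n by omega)]
      omega
    rw [dualWalk_succ, ih (by omega), hsplit, dualWalk_succ Y ω (n - (k + 1)), hrev]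
    ring

lemma mem_noLadderBy_revPrefix_iff (n : ℕ) :
    ω ∈ noLadderBy (fun i => Y (revPrefix n i)) n ↔ ω ∈ atMinimum Y n := by
  simp only [noLadderBy, atMinimum, Set.mem_ofPred_eq]
  constructor
  · intro h j hj
    have := h (n - j) (by omega)
    rw [dualWalk_revPrefix Y ω (by omega), Nat.sub_sub_self hj] at this
    linarith
  · intro h k hk
    rw [dualWalk_revPrefix Y ω hk]
    linarith [h (n - k) (by omega)]

lemma setOf_ladderEpoch_eq_top : {ω | ladderEpoch Y ω = ⊤} = ⋂ n, noLadderBy Y n := by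
  ext ω
  simp only [ladderEpoch, sInf_eq_top, Set.forall_mem_image, ENat.natCast_ne_top, Set.mem_iInter,
    noLadderBy, Set.mem_ofPred_eq]
  constructor
  · intro h n k _
    rcases k.eq_zero_or_pos with rfl | hk
    · simp [dualWalk_zero]
    · exact not_lt.1 fun hpos => h ⟨hk, hpos⟩
  · rintro h k ⟨-, hpos⟩
    exact (h k k le_rfl).not_gt hpos

end Pathwise

section Measurability

variable {m : MeasurableSpace Ω} {Y : ℕ → Ω → ℕ}

lemma measurable_dualWalk {n : ℕ} (hY : ∀ i < n, Measurable (Y i)) :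
    Measurable (dualWalk Y n) := by
  have : Measurable fun ω => aggClaims Y n ω :=
    Finset.measurable_sum _ fun i hi => hY i (Finset.mem_range.1 hi)
  exact (measurable_from_top.comp this).sub_const _

lemma measurableSet_atMinimum {n : ℕ} (hY : ∀ i < n, Measurable (Y i)) :
    MeasurableSet (atMinimum Y n) := by
  simp only [atMinimum, Set.ofPred_forall]
  exact MeasurableSet.iInter fun j => MeasurableSet.iInter fun hj =>
    measurableSet_le (measurable_dualWalk hY) (measurable_dualWalk fun i hi => hY i (by omega))

lemma measurableSet_noLadderBy (hY : ∀ i, Measurable (Y i)) (n : ℕ) :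
    MeasurableSet (noLadderBy Y n) := by
  simp only [noLadderBy, Set.ofPred_forall]
  exact MeasurableSet.iInter fun k => MeasurableSet.iInter fun _ =>
    measurableSet_le (measurable_dualWalk fun i _ => hY i) measurable_const

lemma measurable_maxDescent (hY : ∀ i, Measurable (Y i)) (n : ℕ) :
    Measurable (maxDescent Y n) := by
  have : maxDescent Y n = (Finset.Iic n).sup' Finset.nonempty_Iic (fun j => -dualWalk Y j) := by
    ext ω
    simp [maxDescent, partialSups_apply, Finset.sup'_apply]
  rw [this]
  exact Finset.measurable_sup' _ fun j _ => (measurable_dualWalk fun i _ => hY i).neg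

end Measurability

lemma tendsto_partialSups_div {x : ℕ → ℝ} {d : ℝ} (hd : 0 ≤ d)
    (hx : Tendsto (fun n => x n / n) atTop (𝓝 d)) :
    Tendsto (fun n => partialSups x n / n) atTop (𝓝 d) := by
  refine tendsto_order.2 ⟨fun a ha => ?_, fun b hb => ?_⟩
  · filter_upwards [(tendsto_order.1 hx).1 a ha] with n hn
    exact hn.trans_le (div_le_div_of_nonneg_right (le_partialSups x n) n.cast_nonneg)
  · obtain ⟨c, hdc, hcb⟩ := exists_between hb
    obtain ⟨J, hJ⟩ := eventually_atTop.1
      (((tendsto_order.1 hx).2 c hdc).and (eventually_gt_atTop 0))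
    have hbound : ∀ n : ℕ, partialSups x n ≤ max (partialSups x J) (c * n) := fun n =>
      partialSups_le _ _ _ fun j hjn => by
        rcases le_total j J with hjJ | hJj
        · exact le_max_of_le_left (le_partialSups_of_le x hjJ)
        · obtain ⟨hxj, hj⟩ := hJ j hJj
          have hj' : (0 : ℝ) < j := by exact_mod_cast hj
          rw [div_lt_iff₀ hj'] at hxj
          have : c * j ≤ c * n := by gcongr; exact hd.trans hdc.le
          exact le_max_of_le_right (by linarith)
    have hb0 : 0 < b := hd.trans_lt hb
    filter_upwards [eventually_gt_atTop 0,
      (tendsto_natCast_atTop_atTop.const_mul_atTop hb0).eventually_gt_atTop (partialSups x J)]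
      with n hn hCn
    have hn' : (0 : ℝ) < n := by exact_mod_cast hn
    rw [div_lt_iff₀ hn']
    exact (hbound n).trans_lt (max_lt hCn (by gcongr))

section Probability

variable {m : MeasurableSpace Ω} {μ : Measure Ω}

lemma ProbabilityTheory.iIndepFun.identDistrib_precomp {ι E : Type*} [Countable ι]
    [MeasurableSpace E] {X : ι → Ω → E} (hX : iIndepFun X μ) {i₀ : ι}
    (hid : ∀ i, IdentDistrib (X i) (X i₀) μ μ) {g : ι → ι} (hg : g.Injective) :
    IdentDistrib (fun ω i => X (g i) ω) (fun ω i => X i ω) μ μ :=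
  IdentDistrib.pi (fun i => (hid (g i)).trans (hid i).symm) (hX.precomp hg) hX

lemma ProbabilityTheory.iIndepFun.measure_inter_preimage_eq_mul_of_measurableSet_iSup
    {ι E : Type*} [mE : MeasurableSpace E] {X : ι → Ω → E} (hX : iIndepFun X μ)
    (hXm : ∀ i, Measurable (X i)) {S : Set ι} {i : ι} (hi : i ∉ S) {A : Set Ω}
    (hA : MeasurableSet[⨆ j ∈ S, mE.comap (X j)] A) {B : Set E}
    (hB : MeasurableSet B) :
    μ (A ∩ X i ⁻¹' B) = μ A * μ (X i ⁻¹' B) := by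
  have h : Indep (⨆ j ∈ S, mE.comap (X j)) (⨆ j ∈ ({i} : Set ι), mE.comap (X j)) μ :=
    indep_iSup_of_disjoint (fun j => (hXm j).comap_le)
      ((iIndepFun_iff_iIndep _ _ _).1 hX) (Set.disjoint_singleton_right.2 hi)
  have hB' : MeasurableSet[⨆ j ∈ ({i} : Set ι), mE.comap (X j)] (X i ⁻¹' B) :=
    le_iSup₂ (f := fun j (_ : j ∈ ({i} : Set ι)) => mE.comap (X j)) i rfl _ ⟨B, hB, rfl⟩
  exact (Indep_iff _ _ _).1 h A _ hA hB'

variable {Y : ℕ → Ω → ℕ}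

lemma measure_atMinimum (hindep : iIndepFun Y μ) (hid : ∀ i, IdentDistrib (Y i) (Y 0) μ μ)
    (n : ℕ) : μ (atMinimum Y n) = μ (noLadderBy Y n) := by
  have hrev := hindep.identDistrib_precomp hid (revPrefix_involutive n).injective
  have hset : atMinimum Y n =
      (fun ω i => Y (revPrefix n i) ω) ⁻¹' noLadderBy (fun i y => y i) n := by
    ext ω
    exact (mem_noLadderBy_revPrefix_iff Y ω n).symm
  rw [hset, hrev.measure_mem_eq (measurableSet_noLadderBy (fun i => measurable_pi_apply i) n)]
  rfl

lemma measure_atMinimum_inter_eq_mul (hY : ∀ i, Measurable (Y i)) (hindep : iIndepFun Y μ)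
    (hid : ∀ i, IdentDistrib (Y i) (Y 0) μ μ) (n : ℕ) :
    μ (atMinimum Y n ∩ {ω | Y n ω = 0}) = μ (noLadderBy Y n) * μ {ω | Y 0 ω = 0} := by
  have hA : MeasurableSet[⨆ i ∈ Set.Iio n, MeasurableSpace.comap (Y i) inferInstance]
      (atMinimum Y n) :=
    measurableSet_atMinimum fun i hi => Measurable.of_comap_le
      (le_iSup₂ (f := fun j (_ : j ∈ Set.Iio n) => MeasurableSpace.comap (Y j) _) i hi)
  rw [← measure_atMinimum hindep hid n]
  exact (hindep.measure_inter_preimage_eq_mul_of_measurableSet_iSup hY Set.self_notMem_Iio hA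
    (measurableSet_singleton 0)).trans
    (congrArg _ ((hid n).measure_mem_eq (measurableSet_singleton 0)))

lemma ae_tendsto_aggClaims_div (hindep : iIndepFun Y μ)
    (hid : ∀ i, IdentDistrib (Y i) (Y 0) μ μ) (hint : Integrable (fun ω => (Y 0 ω : ℝ)) μ) :
    ∀ᵐ ω ∂μ, Tendsto (fun n : ℕ => (aggClaims Y n ω : ℝ) / n) atTop
      (𝓝 (∫ ω, (Y 0 ω : ℝ) ∂μ)) := by
  have := strong_law_ae_real (fun i ω => (Y i ω : ℝ)) hint
    (fun i j hij => (hindep.indepFun hij).comp measurable_from_top measurable_from_top)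
    (fun i => (hid i).comp measurable_from_top)
  simpa [aggClaims] using this

lemma ae_tendsto_maxDescent_div (hindep : iIndepFun Y μ)
    (hid : ∀ i, IdentDistrib (Y i) (Y 0) μ μ) (hint : Integrable (fun ω => (Y 0 ω : ℝ)) μ)
    (hμ : ∫ ω, (Y 0 ω : ℝ) ∂μ < 1) :
    ∀ᵐ ω ∂μ, Tendsto (fun N : ℕ => (maxDescent Y N ω : ℝ) / N) atTop
      (𝓝 (1 - ∫ ω, (Y 0 ω : ℝ) ∂μ)) := by
  filter_upwards [ae_tendsto_aggClaims_div hindep hid hint] with ω hω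
  have hW : Tendsto (fun n : ℕ => ((-dualWalk Y n ω : ℤ) : ℝ) / n) atTop
      (𝓝 (1 - ∫ ω, (Y 0 ω : ℝ) ∂μ)) := by
    refine (tendsto_const_nhds.sub hω).congr' ?_
    filter_upwards [eventually_ne_atTop 0] with n hn
    simp only [dualWalk]
    push_cast
    field_simp
    ring
  simpa only [cast_maxDescent] using tendsto_partialSups_div (sub_nonneg.2 hμ.le) hW

section

variable [IsFiniteMeasure μ]

lemma integral_maxDescent (hY : ∀ i, Measurable (Y i)) (hindep : iIndepFun Y μ)
    (hid : ∀ i, IdentDistrib (Y i) (Y 0) μ μ) (N : ℕ) :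
    ∫ ω, (maxDescent Y N ω : ℝ) ∂μ =
      ∑ n ∈ Finset.range N, μ.real (noLadderBy Y n) * μ.real {ω | Y 0 ω = 0} := by
  have hmeas : ∀ n, MeasurableSet (atMinimum Y n ∩ {ω | Y n ω = 0}) := fun n =>
    (measurableSet_atMinimum fun i _ => hY i).inter (hY n (measurableSet_singleton 0))
  simp_rw [maxDescent_eq_sum_indicator]
  rw [integral_finsetSum _ fun n _ => (integrable_const 1).indicator (hmeas n)]
  refine Finset.sum_congr rfl fun n _ => ?_
  rw [integral_indicator_one (hmeas n), measureReal_def,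
    measure_atMinimum_inter_eq_mul hY hindep hid, ENNReal.toReal_mul]
  rfl

lemma tendsto_measureReal_noLadderBy (hY : ∀ i, Measurable (Y i)) :
    Tendsto (fun n => μ.real (noLadderBy Y n)) atTop
      (𝓝 (μ.real {ω | ladderEpoch Y ω = ⊤})) := by
  rw [setOf_ladderEpoch_eq_top]
  refine (ENNReal.tendsto_toReal (measure_ne_top _ _)).comp
    (tendsto_measure_iInter_atTop (fun n => (measurableSet_noLadderBy hY n).nullMeasurableSet)
      (fun a b hab ω h k hk => h k (hk.trans hab)) ⟨0, measure_ne_top _ _⟩)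

end

lemma tendsto_integral_maxDescent_div [IsProbabilityMeasure μ] (hY : ∀ i, Measurable (Y i))
    (hindep : iIndepFun Y μ) (hid : ∀ i, IdentDistrib (Y i) (Y 0) μ μ)
    (hint : Integrable (fun ω => (Y 0 ω : ℝ)) μ) (hμ : ∫ ω, (Y 0 ω : ℝ) ∂μ < 1) :
    Tendsto (fun N : ℕ => (∫ ω, (maxDescent Y N ω : ℝ) ∂μ) / N) atTop
      (𝓝 (1 - ∫ ω, (Y 0 ω : ℝ) ∂μ)) := by
  have hbound : ∀ (N : ℕ) ω, ‖(maxDescent Y N ω : ℝ) / N‖ ≤ 1 := fun N ω => by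
    have h0 : (0 : ℝ) ≤ maxDescent Y N ω := by exact_mod_cast maxDescent_nonneg Y ω N
    have hN : (maxDescent Y N ω : ℝ) ≤ N := by exact_mod_cast maxDescent_le Y ω N
    rw [Real.norm_of_nonneg (by positivity)]
    exact div_le_one_of_le₀ hN N.cast_nonneg
  simp_rw [← integral_div]
  have hmeas : ∀ N : ℕ, AEStronglyMeasurable (fun ω => (maxDescent Y N ω : ℝ) / N) μ := fun N =>
    ((measurable_from_top.comp (measurable_maxDescent hY N)).div_const _).aestronglyMeasurable
  simpa using tendsto_integral_of_dominated_convergence (fun _ => 1) hmeas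
    (integrable_const 1) (fun N => ae_of_all _ (hbound N))
    (ae_tendsto_maxDescent_div hindep hid hint hμ)

end Probability

end

variable {Ω : Type*} [MeasureSpace Ω]

theorem ladder_epoch_defective_general
    [IsProbabilityMeasure (ℙ : Measure Ω)]
    (Y : ℕ → Ω → ℕ) (hY : ∀ i, Measurable (Y i))
    (hindep : iIndepFun Y ℙ)
    (hid : ∀ i, IdentDistrib (Y i) (Y 0) ℙ ℙ)
    (hint : Integrable (fun ω => (Y 0 ω : ℝ)) ℙ)
    (hμ : ∫ ω, (Y 0 ω : ℝ) ∂ℙ < 1) :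
    1 - (ℙ {ω | ladderEpoch Y ω ≠ ⊤}).toReal =
      (1 - ∫ ω, (Y 0 ω : ℝ) ∂ℙ) / (ℙ {ω | Y 0 ω = 0}).toReal := by
  set p₀ := Measure.real ℙ {ω | Y 0 ω = 0}
  set q := Measure.real ℙ {ω | ladderEpoch Y ω = ⊤}
  have hcesaro :
      Tendsto (fun N : ℕ => (∫ ω, (maxDescent Y N ω : ℝ)) / N) atTop (𝓝 (q * p₀)) := by
    simpa [integral_maxDescent hY hindep hid, div_eq_inv_mul, Finset.sum_mul] using
      ((tendsto_measureReal_noLadderBy hY).mul_const p₀).cesaro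
  have hkey : q * p₀ = 1 - ∫ ω, (Y 0 ω : ℝ) := tendsto_nhds_unique hcesaro
    (tendsto_integral_maxDescent_div hY hindep hid hint hμ)
  have hp₀ : p₀ ≠ 0 := fun h => by
    rw [h, mul_zero] at hkey
    linarith
  have hnever : MeasurableSet {ω | ladderEpoch Y ω = ⊤} := by
    rw [setOf_ladderEpoch_eq_top]
    exact MeasurableSet.iInter (measurableSet_noLadderBy hY)
  rw [← measureReal_def, ← measureReal_def, ← Set.compl_ofPred, probReal_compl_eq_one_sub hnever,
    eq_div_iff hp₀]
  linarith

/-- `1 - P(L̂_1 < ∞) = (1 - μ)/p_0` for the dual walk with drift `μ - 1 < 0`. -/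
theorem ladder_epoch_defective
    [IsProbabilityMeasure (ℙ : Measure Ω)]
    (Y : ℕ → Ω → ℕ) (hY : ∀ i, Measurable (Y i))
    (hindep : iIndepFun Y ℙ)
    (hid : ∀ i, IdentDistrib (Y i) (Y 0) ℙ ℙ)
    (hint : Integrable (fun ω => (Y 0 ω : ℝ)) ℙ)
    (hμ : ∫ ω, (Y 0 ω : ℝ) ∂ℙ < 1)
    (hp0 : 0 < (ℙ {ω | Y 0 ω = 0}).toReal) :
    1 - (ℙ {ω | ladderEpoch Y ω ≠ ⊤}).toReal =
      (1 - ∫ ω, (Y 0 ω : ℝ) ∂ℙ) / (ℙ {ω | Y 0 ω = 0}).toReal :=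
  ladder_epoch_defective_general Y hY hindep hid hint hμ
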